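/- arXiv:1607.06649 — 3 statements merged into one kernel-verified Lean document; each statement's English description precedes it below -/
import Mathlib

section
/- Let X be a topological space, f : X → X a continuous map, and (E_n)_{n≥0} a sequence of nonempty subsets of X such that each closure of E_n is compact and f(E_n) ⊇ E_{n+1} for all n ≥ 0. Then there exists a point ξ ∈ X such that f^n(ξ) lies in the closure of E_n for every n ≥ 0. -/
theorem exists_orbit_in_closures {X : Type*} [TopologicalSpace X] (f : X → X)
    (hf : Continuous f) (E : ℕ → Set X) (hne : ∀ n, (E n).Nonempty)
    (hcpt : ∀ n, IsCompact (closure (E n)))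
    (hcov : ∀ n, E (n + 1) ⊆ f '' E n) :
    ∃ ξ : X, ∀ n : ℕ, f^[n] ξ ∈ closure (E n) := by
  -- pullback lemma
  have pull : ∀ n j : ℕ, ∀ x ∈ E (j + n),
      ∃ y, f^[n] y = x ∧ ∀ k ≤ n, f^[k] y ∈ E (j + k) := by
    intro n
    induction n with
    | zero =>
      intro j x hx
      refine ⟨x, rfl, fun k hk => ?_⟩
      have : k = 0 := Nat.le_zero.mp hk
      subst this
      simpa using hx
    | succ n ih =>
      intro j x hx
      obtain ⟨w, hw, hfw⟩ := hcov (j + n) hx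
      obtain ⟨y, hy, hall⟩ := ih j w hw
      refine ⟨y, ?_, ?_⟩
      · rw [Function.iterate_succ_apply', hy, hfw]
      · intro k hk
        rcases Nat.lt_or_ge k (n + 1) with h | h
        · exact hall k (Nat.lt_succ_iff.mp h)
        · have : k = n + 1 := le_antisymm hk h
          subst this
          rw [Function.iterate_succ_apply', hy, hfw]
          exact hx
  set C : ℕ → Set X := fun n => {x | ∀ k ≤ n, f^[k] x ∈ closure (E k)} with hC
  have hCne : ∀ n, (C n).Nonempty := by
    intro n
    obtain ⟨x, hx⟩ := hne n
    obtain ⟨y, -, hall⟩ := pull n 0 x (by simpa using hx)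
    exact ⟨y, fun k hk => subset_closure (by simpa using hall k hk)⟩
  have hCclosed : ∀ n, IsClosed (C n) := by
    intro n
    have : C n = ⋂ k ∈ Set.Iic n, (f^[k]) ⁻¹' closure (E k) := by
      ext x; simp [hC, Set.mem_iInter]
    rw [this]
    exact isClosed_biInter fun k _ => (isClosed_closure).preimage (hf.iterate k)
  have hCsub : ∀ n, C (n + 1) ⊆ C n := fun n x hx k hk => hx k (hk.trans (Nat.le_succ n))
  have hC0 : IsCompact (C 0) := by
    apply (hcpt 0).of_isClosed_subset (hCclosed 0)
    intro x hx
    simpa using hx 0 (le_refl 0)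
  obtain ⟨ξ, hξ⟩ := IsCompact.nonempty_iInter_of_sequence_nonempty_isCompact_isClosed
    C hCsub hCne hC0 hCclosed
  exact ⟨ξ, fun n => (Set.mem_iInter.mp hξ n) n (le_refl n)⟩
end

section
/- Let Y be a compact Hausdorff space, S ⊆ Y a finite set, and X ⊆ Y \ S a set that is closed in the subspace Y \ S. Let K be a connected component of X whose closure in Y does not meet S. Then there exists an open set V ⊆ Y with K ⊆ V, the closure of V in Y disjoint from S, and the boundary of V (in Y \ S) disjoint from X. -/
/-!
Thicken `K` to an open set `O` whose closure avoids `S`. Then `N = X ∩ closure O` is compact and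
`K` is a connected component of `N`; since components of a compact Hausdorff space are
intersections of clopen sets, `K` lies in a compact, relatively clopen piece `D ⊆ O` of `N`. Being
relatively open in `N` and contained in `O`, `D` is relatively open in `X`, so it is disjoint from
the closed set `closure (X \ D)`; an open neighbourhood of `D` whose closure misses
`closure (X \ D)` is the required `V`.
-/

open Set

lemma exists_isClopen_subset_of_connectedComponent_subset {α : Type*} [TopologicalSpace α]
    [CompactSpace α] [T2Space α] {x : α} {U : Set α} (hU : IsOpen U)
    (h : connectedComponent x ⊆ U) :
    ∃ V : Set α, IsClopen V ∧ x ∈ V ∧ V ⊆ U := by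
  have hempty : Uᶜ ∩ ⋂ Z : {Z : Set α // IsClopen Z ∧ x ∈ Z}, (Z : Set α) = ∅ := by
    rw [← connectedComponent_eq_iInter_isClopen x]
    exact eq_empty_of_forall_notMem fun y ⟨hyU, hy⟩ => hyU (h hy)
  obtain ⟨t, ht⟩ := hU.isClosed_compl.isCompact.elim_finite_subfamily_closed _
    (fun Z => Z.2.1.isClosed) hempty
  refine ⟨⋂ Z ∈ t, (Z : Set α), t.finite_toSet.isClopen_biInter fun Z _ => Z.2.1,
    mem_iInter₂.mpr fun Z _ => Z.2.2, fun y hy => ?_⟩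
  by_contra hyU
  exact notMem_empty y (ht ▸ ⟨hyU, hy⟩)

section

variable {Y : Type*} [TopologicalSpace Y]

lemma IsCompact.exists_isOpen_connectedComponentIn_subset_inter [T2Space Y] {N U : Set Y}
    {x : Y} (hN : IsCompact N) (hx : x ∈ N) (hU : IsOpen U) (h : connectedComponentIn N x ⊆ U) :
    ∃ W : Set Y, IsOpen W ∧ IsCompact (W ∩ N) ∧
      connectedComponentIn N x ⊆ W ∩ N ∧ W ∩ N ⊆ U := by
  have : CompactSpace N := isCompact_iff_compactSpace.mp hN
  have hcc : connectedComponent (⟨x, hx⟩ : N) ⊆ Subtype.val ⁻¹' U := by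
    rw [← image_subset_iff, ← connectedComponentIn_eq_image hx]
    exact h
  obtain ⟨D, hD, hxD, hDU⟩ :=
    exists_isClopen_subset_of_connectedComponent_subset (hU.preimage continuous_subtype_val) hcc
  obtain ⟨W, hW, rfl⟩ := isOpen_induced_iff.mp hD.isOpen
  have hWN : Subtype.val '' (Subtype.val ⁻¹' W : Set N) = W ∩ N := by
    rw [Subtype.image_preimage_coe, inter_comm]
  refine ⟨W, hW, hWN ▸ hD.isClosed.isCompact.image continuous_subtype_val, ?_,
    hWN ▸ image_subset_iff.mpr hDU⟩
  rw [← hWN, connectedComponentIn_eq_image hx]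
  exact image_mono (hD.connectedComponent_subset hxD)

lemma connectedComponentIn_inter_eq {X A : Set Y} {x : Y} (hx : x ∈ X)
    (h : connectedComponentIn X x ⊆ A) :
    connectedComponentIn (X ∩ A) x = connectedComponentIn X x :=
  (connectedComponentIn_mono x inter_subset_left).antisymm <|
    isPreconnected_connectedComponentIn.subset_connectedComponentIn (mem_connectedComponentIn hx)
      (subset_inter (connectedComponentIn_subset X x) h)

lemma exists_isOpen_connectedComponentIn_subset_closure_inter_subset
    [T2Space Y] [NormalSpace Y] {X O : Set Y} {x : Y} (hx : x ∈ X)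
    (hO : IsOpen O) (hKO : connectedComponentIn X x ⊆ O) (hN : IsCompact (X ∩ closure O)) :
    ∃ V : Set Y, IsOpen V ∧ connectedComponentIn X x ⊆ V ∧ V ⊆ O ∧ closure V ∩ X ⊆ V := by
  have hK := connectedComponentIn_inter_eq hx (hKO.trans subset_closure)
  obtain ⟨W, hW, hDc, hKD, hDO⟩ := hN.exists_isOpen_connectedComponentIn_subset_inter
    ⟨hx, subset_closure (hKO (mem_connectedComponentIn hx))⟩ hO (hK ▸ hKO)
  set D := W ∩ (X ∩ closure O)
  -- `D` is relatively open in `X`: it is cut out of `X` by the open set `W ∩ O`.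
  have hWO : Disjoint (W ∩ O) (closure (X \ D)) := by
    refine Disjoint.closure_right ?_ (hW.inter hO)
    exact disjoint_left.mpr fun y ⟨hyW, hyO⟩ ⟨hyX, hyD⟩ =>
      hyD ⟨hyW, hyX, subset_closure hyO⟩
  have hD : Disjoint D (closure (X \ D)) :=
    hWO.mono_left (subset_inter inter_subset_left hDO)
  obtain ⟨V, hV, hDV, hclV⟩ := normal_exists_closure_subset hDc.isClosed
    isClosed_closure.isOpen_compl (subset_compl_iff_disjoint_right.mpr hD)
  refine ⟨V ∩ O, hV.inter hO, fun y hy => ⟨hDV (hKD (hK ▸ hy)), hDO (hKD (hK ▸ hy))⟩,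
    inter_subset_right, fun y ⟨hycl, hyX⟩ => ?_⟩
  have hyD : y ∈ D := by
    by_contra hyD
    exact hclV (closure_mono inter_subset_left hycl) (subset_closure ⟨hyX, hyD⟩)
  exact ⟨hDV hyD, hDO hyD⟩

lemma isClosed_connectedComponentIn_of_closure_subset {X : Set Y} {x : Y} (hx : x ∈ X)
    (h : closure (connectedComponentIn X x) ⊆ X) : IsClosed (connectedComponentIn X x) :=
  isClosed_of_closure_subset <|
    isPreconnected_connectedComponentIn.closure.subset_connectedComponentIn
      (subset_closure (mem_connectedComponentIn hx)) h

lemma disjoint_frontier_preimage_val {s V X : Set Y} (hV : IsOpen V) (h : closure V ∩ X ⊆ V) :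
    Disjoint (frontier (Subtype.val ⁻¹' V : Set s)) (Subtype.val ⁻¹' X) := by
  refine disjoint_left.mpr fun y hy hyX => ?_
  have hyV := continuous_subtype_val.frontier_preimage_subset V hy
  rw [hV.frontier_eq] at hyV
  exact hyV.2 (h ⟨hyV.1, hyX⟩)

end

theorem separate_bounded_component {Y : Type*} [TopologicalSpace Y]
    [CompactSpace Y] [T2Space Y] (S : Set Y) (hS : S.Finite)
    (X : Set Y) (hXS : X ⊆ Sᶜ)
    (hXclosed : IsClosed ((Subtype.val ⁻¹' X) : Set (Sᶜ : Set Y)))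
    (K : Set Y) (x : Y) (hx : x ∈ X) (hK : K = connectedComponentIn X x)
    (hKS : Disjoint (closure K) S) :
    ∃ V : Set Y, IsOpen V ∧ K ⊆ V ∧ Disjoint (closure V) S ∧
      Disjoint (frontier ((Subtype.val ⁻¹' V) : Set (Sᶜ : Set Y)))
        ((Subtype.val ⁻¹' X) : Set (Sᶜ : Set Y)) := by
  subst hK
  have hclX : Sᶜ ∩ closure X ⊆ X := by
    simpa only [inter_eq_right.mpr hXS] using isClosed_preimage_val.mp hXclosed
  have hKclosed := isClosed_connectedComponentIn_of_closure_subset hx fun y hy =>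
    hclX ⟨subset_compl_iff_disjoint_right.mpr hKS hy,
      closure_mono (connectedComponentIn_subset X x) hy⟩
  obtain ⟨O, hO, hKO, hclO⟩ := normal_exists_closure_subset hKclosed hS.isClosed.isOpen_compl
    ((connectedComponentIn_subset X x).trans hXS)
  have hN : X ∩ closure O = closure X ∩ closure O :=
    (inter_subset_inter_left _ subset_closure).antisymm fun y ⟨hyX, hyO⟩ =>
      ⟨hclX ⟨hclO hyO, hyX⟩, hyO⟩
  obtain ⟨V, hV, hKV, hVO, hclV⟩ :=
    exists_isOpen_connectedComponentIn_subset_closure_inter_subset hx hO hKO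
      (hN ▸ (isClosed_closure.inter isClosed_closure).isCompact)
  exact ⟨V, hV, hKV, subset_compl_iff_disjoint_right.mp ((closure_mono hVO).trans hclO),
    disjoint_frontier_preimage_val hV hclV⟩
end

section
/- Let B > 0, α > 1, and R > max{α, exp(2/B)} be real numbers, and let E_n denote the tower sequence E_1 = 1, E_{n+1} = exp(E_n). Let (R_n)_{n≥0} and (S_n)_{n≥0} be sequences of reals with R_0 = S_0 = R, all terms ≥ R, satisfying: log(log R_1 / log S_0) ≥ 1, and for all n ≥ 2, whenever R_{n-1}/S_{n-2} > α one has log(log R_n / log S_{n-1}) ≥ B · log(R_{n-1}/S_{n-2}). Then log(log R_n / log S_{n-1}) ≥ E_n for all n ≥ 1. -/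
theorem tower_growth (B α R : ℝ) (hB : 0 < B) (hα : 1 < α)
    (hR : R > max α (Real.exp (2 / B)))
    (E : ℕ → ℝ) (hE1 : E 1 = 1) (hErec : ∀ n ≥ 1, E (n + 1) = Real.exp (E n))
    (Rs Ss : ℕ → ℝ) (hR0 : Rs 0 = R) (hS0 : Ss 0 = R)
    (hRge : ∀ n, R ≤ Rs n) (hSge : ∀ n, R ≤ Ss n)
    (h1 : Real.log (Real.log (Rs 1) / Real.log (Ss 0)) ≥ 1)
    (h2 : ∀ n ≥ 2, Rs (n - 1) / Ss (n - 2) > α →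
      Real.log (Real.log (Rs n) / Real.log (Ss (n - 1))) ≥
        B * Real.log (Rs (n - 1) / Ss (n - 2))) :
    ∀ n ≥ 1, Real.log (Real.log (Rs n) / Real.log (Ss (n - 1))) ≥ E n := by
  have hRα : α < R := lt_of_le_of_lt (le_max_left _ _) hR
  have hRe : Real.exp (2 / B) < R := lt_of_le_of_lt (le_max_right _ _) hR
  have hR1 : 1 < R := lt_trans hα hRα
  have hR0' : (0 : ℝ) < R := lt_trans one_pos hR1
  have hlogR : 0 < Real.log R := Real.log_pos hR1
  have hBlogR : 2 < B * Real.log R := by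
    have h2B : 2 / B < Real.log R := (Real.lt_log_iff_exp_lt hR0').2 hRe
    calc 2 = B * (2 / B) := by field_simp
    _ < B * Real.log R := by exact mul_lt_mul_of_pos_left h2B hB
  -- E n ≥ 1 for n ≥ 1
  have hEge : ∀ n ≥ 1, (1 : ℝ) ≤ E n := by
    intro n hn
    induction n, hn using Nat.le_induction with
    | base => simp [hE1]
    | succ n hn ih =>
      rw [hErec n hn]
      calc (1:ℝ) ≤ Real.exp 1 := Real.one_le_exp one_pos.le
      _ ≤ Real.exp (E n) := Real.exp_le_exp.2 ih
  intro n hn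
  induction n, hn using Nat.le_induction with
  | base => simpa [hE1] using h1
  | succ n hn ih =>
    rw [hErec n hn]
    show Real.log (Real.log (Rs (n + 1)) / Real.log (Ss n)) ≥ Real.exp (E n)
    set r := Rs n with hrdef
    set s := Ss (n - 1) with hsdef
    have hrR : R ≤ r := hRge n
    have hsR : R ≤ s := hSge (n - 1)
    have hr0 : (0:ℝ) < r := lt_of_lt_of_le hR0' hrR
    have hs0 : (0:ℝ) < s := lt_of_lt_of_le hR0' hsR
    have hlr : 0 < Real.log r := lt_of_lt_of_le hlogR (Real.log_le_log hR0' hrR)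
    have hls : 0 < Real.log s := lt_of_lt_of_le hlogR (Real.log_le_log hR0' hsR)
    have hlsR : Real.log R ≤ Real.log s := Real.log_le_log hR0' hsR
    have hexp2 : 2 ≤ Real.exp (E n) := by
      calc (2:ℝ) = 1 + 1 := by norm_num
      _ ≤ Real.exp 1 := Real.add_one_le_exp 1
      _ ≤ Real.exp (E n) := Real.exp_le_exp.2 (hEge n hn)
    have key : Real.exp (E n) ≤ Real.log r / Real.log s := by
      calc Real.exp (E n) ≤ Real.exp (Real.log (Real.log r / Real.log s)) :=
        Real.exp_le_exp.2 ih
      _ = Real.log r / Real.log s := Real.exp_log (div_pos hlr hls)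
    have key' : Real.exp (E n) * Real.log s ≤ Real.log r := (le_div_iff₀ hls).1 key
    have hlogratio : (Real.exp (E n) - 1) * Real.log R ≤ Real.log (r / s) := by
      rw [Real.log_div (ne_of_gt hr0) (ne_of_gt hs0)]
      nlinarith [mul_le_mul_of_nonneg_left hlsR (by linarith : (0:ℝ) ≤ Real.exp (E n) - 1)]
    have hαlt : α < r / s := by
      have hlog : Real.log α < Real.log (r / s) := by
        have : Real.log R ≤ (Real.exp (E n) - 1) * Real.log R := by nlinarith
        have hαR : Real.log α < Real.log R := Real.log_lt_log (lt_trans one_pos hα) hRα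
        linarith
      calc α = Real.exp (Real.log α) := (Real.exp_log (lt_trans one_pos hα)).symm
      _ < Real.exp (Real.log (r / s)) := Real.exp_lt_exp.2 hlog
      _ = r / s := Real.exp_log (div_pos hr0 hs0)
    have hmain := h2 (n + 1) (by omega) (by simpa using hαlt)
    have heq1 : n + 1 - 1 = n := rfl
    have heq2 : n + 1 - 2 = n - 1 := rfl
    rw [heq1, heq2] at hmain
    have step : B * ((Real.exp (E n) - 1) * Real.log R) ≤ B * Real.log (r / s) :=
      mul_le_mul_of_nonneg_left hlogratio hB.le
    have : Real.exp (E n) ≤ B * ((Real.exp (E n) - 1) * Real.log R) := by nlinarith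
    linarith
end
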